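/- arXiv:0804.1401 — 2 statements merged into one kernel-verified Lean document; each statement's English description precedes it below -/
import Mathlib

section
/- In the braid group B_n, for positive integers i and j, β(i,1,1,…,1,j) with n-2 ones in the middle equals θ·β(i+j-1), i.e. σ_1^i ρ (σ_1ρ)^{n-2} σ_1^j ρ = θ σ_1^{i+j-1} ρ. -/
/-- The braid relations on `n` strands, on generators indexed by `Fin (n-1)`
(index `k` represents the Artin generator `σ_{k+1}`). -/
def braidRels (n : ℕ) : Set (FreeGroup (Fin (n - 1))) :=
  {r | (∃ i j : Fin (n - 1), (i : ℕ) + 2 ≤ (j : ℕ) ∧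
          r = FreeGroup.of i * FreeGroup.of j * (FreeGroup.of i)⁻¹ * (FreeGroup.of j)⁻¹) ∨
       (∃ i j : Fin (n - 1), (i : ℕ) + 1 = (j : ℕ) ∧
          r = (FreeGroup.of i * FreeGroup.of j * FreeGroup.of i) *
              (FreeGroup.of j * FreeGroup.of i * FreeGroup.of j)⁻¹)}

/-- The braid group `B_n`. -/
abbrev BraidGroup (n : ℕ) := PresentedGroup (braidRels n)

/-- The Artin generator `σ_i` of `B_n`, for `1 ≤ i ≤ n-1` (junk value `1` otherwise). -/
noncomputable def σ (n i : ℕ) : BraidGroup n :=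
  if h : 1 ≤ i ∧ i ≤ n - 1 then PresentedGroup.of (⟨i - 1, by omega⟩ : Fin (n - 1)) else 1

/-- `ρ = σ_{n-1} ⋯ σ_2 σ_1`. -/
noncomputable def braidρ (n : ℕ) : BraidGroup n :=
  (((List.range (n - 1)).map (fun k => σ n (k + 1))).reverse).prod

/-- `δ = σ_1 σ_2 ⋯ σ_{n-1}`. -/
noncomputable def braidδ (n : ℕ) : BraidGroup n :=
  ((List.range (n - 1)).map (fun k => σ n (k + 1))).prod

/-- The full twist `θ = (σ_1 σ_2 ⋯ σ_{n-1})^n`. -/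
noncomputable def braidθ (n : ℕ) : BraidGroup n := braidδ n ^ n

/-- `β(I) = σ_1^{i_1} ρ σ_1^{i_2} ρ ⋯ σ_1^{i_d} ρ` for a sequence `I` of positive integers. -/
noncomputable def braidβ (n : ℕ) (I : List ℕ) : BraidGroup n :=
  (I.map (fun i => σ n 1 ^ i * braidρ n)).prod

/-!
Write `ρ = σ_{n-1} ⋯ σ_1` and `δ = σ_1 ⋯ σ_{n-1}`. Since `σ_k ρ = ρ σ_{k+1}` for `k < n - 1`,
pushing the `σ_1`'s of `(σ_1 ρ)^{n-1}` to the right turns it into `ρ^n`. So `ρ^n` commutes with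
`σ_1 ρ` and with `ρ`, hence with `σ_1` and with its `ρ`-conjugates `σ_k`: it is central.
The half twist `Δ` conjugates `ρ` to `δ`, so `δ^n = Δ ρ^n Δ⁻¹ = ρ^n`. Hence `θ = (σ_1 ρ)^{n-1}`
is central, and `σ_1^i ρ (σ_1 ρ)^{n-2} σ_1^j ρ = σ_1^{i-1} θ σ_1^j ρ = θ σ_1^{i+j-1} ρ`.
-/

namespace BraidGroup

variable {n : ℕ}

theorem σ_eq_of {a : ℕ} (ha : 1 ≤ a) (han : a ≤ n - 1) :
    σ n a = PresentedGroup.of (⟨a - 1, by omega⟩ : Fin (n - 1)) :=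
  dif_pos ⟨ha, han⟩

theorem σ_eq_one {a : ℕ} (h : ¬(1 ≤ a ∧ a ≤ n - 1)) : σ n a = 1 :=
  dif_neg h

theorem commute_σ_σ {a b : ℕ} (hab : a + 2 ≤ b) : Commute (σ n a) (σ n b) := by
  by_cases ha : 1 ≤ a
  · by_cases hb : b ≤ n - 1
    · rw [σ_eq_of ha (by omega), σ_eq_of (by omega) hb]
      refine PresentedGroup.mk_eq_mk_of_mul_inv_mem
        (Or.inl ⟨⟨a - 1, by omega⟩, ⟨b - 1, by omega⟩, show a - 1 + 2 ≤ b - 1 by omega, ?_⟩)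
      simp only [mul_inv_rev, mul_assoc]
    · rw [σ_eq_one (a := b) (by omega)]
      exact Commute.one_right _
  · rw [σ_eq_one (a := a) (by omega)]
    exact Commute.one_left _

theorem σ_braid {a : ℕ} (ha : 1 ≤ a) (han : a + 1 ≤ n - 1) :
    σ n a * σ n (a + 1) * σ n a = σ n (a + 1) * σ n a * σ n (a + 1) := by
  rw [σ_eq_of ha (by omega), σ_eq_of (by omega) han]
  exact PresentedGroup.mk_eq_mk_of_mul_inv_mem
    (Or.inr ⟨_, _, show a - 1 + 1 = a + 1 - 1 by omega, rfl⟩)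

variable (n) in
noncomputable def ascProd : ℕ → BraidGroup n
  | 0 => 1
  | m + 1 => ascProd m * σ n (m + 1)

variable (n) in
noncomputable def descProd : ℕ → BraidGroup n
  | 0 => 1
  | m + 1 => σ n (m + 1) * descProd m

variable (n) in
/-- The positive half twist `Δ` of the strands `1, …, m + 1`. -/
noncomputable def halfTwist : ℕ → BraidGroup n
  | 0 => 1
  | m + 1 => ascProd n (m + 1) * halfTwist m

theorem braidδ_eq_ascProd : braidδ n = ascProd n (n - 1) := by
  suffices ∀ m, ((List.range m).map (fun k => σ n (k + 1))).prod = ascProd n m from this _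
  intro m
  induction m with
  | zero => rfl
  | succ m ih => simp [List.range_succ, ih, ascProd]

theorem braidρ_eq_descProd : braidρ n = descProd n (n - 1) := by
  suffices ∀ m, ((List.range m).map (fun k => σ n (k + 1))).reverse.prod = descProd n m from
    this _
  intro m
  induction m with
  | zero => rfl
  | succ m ih => simp [List.range_succ, ih, descProd]

theorem commute_σ_ascProd {m b : ℕ} (hb : m + 2 ≤ b) : Commute (σ n b) (ascProd n m) := by
  induction m with
  | zero => exact Commute.one_right _
  | succ m ih => exact (ih (by omega)).mul_right (commute_σ_σ hb).symm

theorem commute_σ_descProd {m b : ℕ} (hb : m + 2 ≤ b) : Commute (σ n b) (descProd n m) := by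
  induction m with
  | zero => exact Commute.one_right _
  | succ m ih => exact (commute_σ_σ hb).symm.mul_right (ih (by omega))

theorem commute_σ_halfTwist {m b : ℕ} (hb : m + 2 ≤ b) : Commute (σ n b) (halfTwist n m) := by
  induction m with
  | zero => exact Commute.one_right _
  | succ m ih => exact (commute_σ_ascProd hb).mul_right (ih (by omega))

theorem σ_mul_descProd {k m : ℕ} (hk : 1 ≤ k) (hkm : k + 1 ≤ m) (hm : m ≤ n - 1) :
    σ n k * descProd n m = descProd n m * σ n (k + 1) := by
  induction m, hkm using Nat.le_induction with
  | base =>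
    obtain ⟨k, rfl⟩ : ∃ k', k = k' + 1 := ⟨k - 1, by omega⟩
    simp only [descProd, ← mul_assoc]
    rw [σ_braid hk hm, mul_assoc _ _ (descProd n k), (commute_σ_descProd (by omega)).eq]
    simp only [mul_assoc]
  | succ m hkm ih =>
    rw [descProd, ← mul_assoc, (commute_σ_σ (by omega)).eq, mul_assoc, ih (by omega), mul_assoc]

theorem ascProd_mul_halfTwist (m : ℕ) (hm : m + 1 ≤ n - 1) :
    ascProd n (m + 1) * halfTwist n m = halfTwist n m * descProd n (m + 1) := by
  induction m with
  | zero => simp [ascProd, descProd, halfTwist]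
  | succ m ih =>
    calc ascProd n (m + 2) * halfTwist n (m + 1)
        = ascProd n (m + 1) * (σ n (m + 2) * halfTwist n m) * descProd n (m + 1) := by
          rw [ascProd, halfTwist, ih (by omega)]
          simp only [mul_assoc]
      _ = halfTwist n (m + 1) * descProd n (m + 2) := by
          rw [(commute_σ_halfTwist le_rfl).eq, halfTwist, descProd.eq_2 n (m + 1)]
          simp only [mul_assoc]

theorem of_eq_σ (k : Fin (n - 1)) : PresentedGroup.of k = σ n (k + 1) := by
  rw [σ_eq_of (by omega) (by omega)]
  rfl

theorem σ_one_mul_descProd_pow {k : ℕ} (hk : k + 1 ≤ n - 1) :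
    σ n 1 * descProd n (n - 1) ^ k = descProd n (n - 1) ^ k * σ n (k + 1) := by
  induction k with
  | zero => simp
  | succ k ih =>
    rw [pow_succ, ← mul_assoc, ih (by omega), mul_assoc,
      σ_mul_descProd (by omega) (by omega) le_rfl, mul_assoc]

theorem σ_one_descProd_pow_mul_σ_one {m : ℕ} (hm : m + 1 ≤ n - 1) :
    (σ n 1 * descProd n (n - 1)) ^ m * σ n 1 = descProd n (n - 1) ^ m * descProd n (m + 1) := by
  induction m with
  | zero => simp [descProd]
  | succ m ih =>
    rw [pow_succ', mul_assoc, ih (by omega), ← mul_assoc, mul_assoc (σ n 1), ← pow_succ',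
      σ_one_mul_descProd_pow hm, mul_assoc, ← descProd]

theorem σ_one_descProd_pow_sub_one (hn : 2 ≤ n) :
    (σ n 1 * descProd n (n - 1)) ^ (n - 1) = descProd n (n - 1) ^ n := by
  have := σ_one_descProd_pow_mul_σ_one (n := n) (m := n - 2) (by omega)
  rw [show n - 2 + 1 = n - 1 by omega] at this
  calc (σ n 1 * descProd n (n - 1)) ^ (n - 1)
      = (σ n 1 * descProd n (n - 1)) ^ (n - 2) * σ n 1 * descProd n (n - 1) := by
        rw [mul_assoc _ (σ n 1), ← pow_succ, show n - 2 + 1 = n - 1 by omega]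
    _ = descProd n (n - 1) ^ n := by
        rw [this, ← pow_succ, ← pow_succ, show n - 2 + 1 + 1 = n by omega]

theorem descProd_pow_mem_center (hn : 2 ≤ n) :
    descProd n (n - 1) ^ n ∈ Subgroup.center (BraidGroup n) := by
  set ρ := descProd n (n - 1)
  have hσρ : Commute (ρ ^ n) (σ n 1 * ρ) := by
    rw [← σ_one_descProd_pow_sub_one hn]
    exact Commute.pow_self _ _
  have hσ : Commute (ρ ^ n) (σ n 1) := by
    simpa using hσρ.mul_right (Commute.pow_self ρ n).inv_right
  have hgen {k : ℕ} (hk : k + 1 ≤ n - 1) : Commute (ρ ^ n) (σ n (k + 1)) := by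
    rw [eq_inv_mul_of_mul_eq (σ_one_mul_descProd_pow hk).symm]
    exact (Commute.pow_pow_self ρ n k).inv_right.mul_right
      (hσ.mul_right (Commute.pow_pow_self ρ n k))
  rw [Subgroup.mem_center_iff]
  intro g
  refine Subgroup.mem_centralizer_singleton_iff.mp
    (PresentedGroup.generated_by _ _ (fun k => ?_) g)
  exact Subgroup.mem_centralizer_singleton_iff.mpr (of_eq_σ k ▸ hgen k.isLt).eq.symm

theorem descProd_pow_eq_ascProd_pow (hn : 2 ≤ n) :
    descProd n (n - 1) ^ n = ascProd n (n - 1) ^ n := by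
  have hconj : SemiconjBy (halfTwist n (n - 2)) (descProd n (n - 1)) (ascProd n (n - 1)) := by
    have := ascProd_mul_halfTwist (n := n) (n - 2) (by omega)
    rwa [show n - 2 + 1 = n - 1 by omega, eq_comm] at this
  have hΔ := (hconj.pow_right n).eq
  rw [Subgroup.mem_center_iff.mp (descProd_pow_mem_center hn)] at hΔ
  exact mul_right_cancel hΔ

theorem σ_one_mul_braidρ_pow_eq_braidθ (hn : 2 ≤ n) :
    (σ n 1 * braidρ n) ^ (n - 1) = braidθ n := by
  rw [braidθ, braidρ_eq_descProd, braidδ_eq_ascProd, σ_one_descProd_pow_sub_one hn,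
    descProd_pow_eq_ascProd_pow hn]

theorem braidθ_mem_center (hn : 2 ≤ n) : braidθ n ∈ Subgroup.center (BraidGroup n) := by
  rw [braidθ, braidδ_eq_ascProd, ← descProd_pow_eq_ascProd_pow hn]
  exact descProd_pow_mem_center hn

end BraidGroup

theorem beta_ones_reduction_general (n : ℕ) (hn : 3 ≤ n) (i j : ℕ) (hi : 1 ≤ i) :
    braidβ n (i :: (List.replicate (n - 2) 1 ++ [j])) = braidθ n * braidβ n [i + j - 1] ∧
    σ n 1 ^ i * braidρ n * (σ n 1 * braidρ n) ^ (n - 2) * (σ n 1 ^ j * braidρ n) =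
      braidθ n * (σ n 1 ^ (i + j - 1) * braidρ n) := by
  have hword : σ n 1 ^ i * braidρ n * (σ n 1 * braidρ n) ^ (n - 2) * (σ n 1 ^ j * braidρ n) =
      braidθ n * (σ n 1 ^ (i + j - 1) * braidρ n) := by
    obtain ⟨i, rfl⟩ := Nat.exists_eq_add_of_le' hi
    calc σ n 1 ^ (i + 1) * braidρ n * (σ n 1 * braidρ n) ^ (n - 2) * (σ n 1 ^ j * braidρ n)
        = σ n 1 ^ i * (σ n 1 * braidρ n) ^ (n - 1) * (σ n 1 ^ j * braidρ n) := by
          rw [← mul_pow_sub_one (show n - 1 ≠ 0 by omega), Nat.sub_sub, pow_succ]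
          simp only [mul_assoc]
      _ = σ n 1 ^ i * braidθ n * (σ n 1 ^ j * braidρ n) := by
          rw [BraidGroup.σ_one_mul_braidρ_pow_eq_braidθ (by omega)]
      _ = braidθ n * (σ n 1 ^ (i + 1 + j - 1) * braidρ n) := by
          rw [Subgroup.mem_center_iff.mp (BraidGroup.braidθ_mem_center (by omega)),
            show i + 1 + j - 1 = i + j by omega, pow_add]
          simp only [mul_assoc]
  refine ⟨?_, hword⟩
  simpa [braidβ, List.prod_replicate, mul_assoc] using hword

/-- in `B_n`, for positive integers `i, j`,
`β(i,1,…,1,j)` with `n-2` ones in the middle equals `θ·β(i+j-1)`, i.e.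
`σ_1^i ρ (σ_1 ρ)^{n-2} σ_1^j ρ = θ σ_1^{i+j-1} ρ`. -/
theorem beta_ones_reduction (n : ℕ) (hn : 3 ≤ n) (i j : ℕ) (hi : 1 ≤ i) (hj : 1 ≤ j) :
    braidβ n (i :: (List.replicate (n - 2) 1 ++ [j])) = braidθ n * braidβ n [i + j - 1] ∧
    σ n 1 ^ i * braidρ n * (σ n 1 * braidρ n) ^ (n - 2) * (σ n 1 ^ j * braidρ n) =
      braidθ n * (σ n 1 ^ (i + j - 1) * braidρ n) :=
  beta_ones_reduction_general n hn i j hi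
end

section
/- Under the Artin action of B_n on F_n, for a positive integer m the braid β(m) = σ_1^m ρ satisfies: a_1^{β(m)} = (a_3a_1^{-1})^{(m-1)/2} a_3 a_2^{-1} (a_3a_1^{-1})^{-(m-1)/2} if m is odd; a_1^{β(m)} = (a_3a_1^{-1})^{m/2} a_2 a_1^{-1} (a_3a_1^{-1})^{-m/2} if m is even; and a_i^{β(m)} = a_{i+1} a_1^{-1} for 2 ≤ i ≤ n-1. -/
/-!
Since `σ_1` fixes `a_2` and sends `a_1 ↦ a_2 a_1⁻¹`, the square `σ_1²` acts on `a_1` as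
conjugation by `a_2`; hence `a_1^{σ_1^m}` is `a_2^k a_1 a_2^{-k}` for `m = 2k` and
`a_2^k (a_2 a_1⁻¹) a_2^{-k}` for `m = 2k + 1`, while `σ_1` fixes every other `a_i`.
Peeling off `σ_{n-1}` from `ρ = σ_{n-1} ⋯ σ_1` shows by induction on `n` that `ρ` sends
`a_i ↦ a_{i+1} a_1⁻¹` for `i < n`; applying this to `a_1` and `a_2` gives the formulas.
-/

namespace Artin

/-- `A j` is the generator `a_j = ξ_1⋯ξ_j` of the free group `F_n` (with `A 0 = 1`). -/
def A (j : ℕ) : FreeGroup ℕ := if j = 0 then 1 else FreeGroup.of j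

/-- The effect of the Artin generator `σ_i` on the generators `a_j`. -/
def fwd (i : ℕ) : ℕ → FreeGroup ℕ := fun j =>
  if 1 ≤ i ∧ j = i then A (i + 1) * (A i)⁻¹ * A (i - 1) else FreeGroup.of j

/-- The effect of `σ_i⁻¹` on the generators `a_j`. -/
def bwd (i : ℕ) : ℕ → FreeGroup ℕ := fun j =>
  if 1 ≤ i ∧ j = i then A (i - 1) * (A i)⁻¹ * A (i + 1) else FreeGroup.of j

lemma lift_fwd_A (i k : ℕ) (h : k ≠ i) : FreeGroup.lift (fwd i) (A k) = A k := by
  by_cases hk : k = 0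
  · simp [A, hk]
  · simp only [A, if_neg hk, FreeGroup.lift_apply_of, fwd]
    rw [if_neg]
    rintro ⟨-, rfl⟩; exact h rfl

lemma lift_bwd_A (i k : ℕ) (h : k ≠ i) : FreeGroup.lift (bwd i) (A k) = A k := by
  by_cases hk : k = 0
  · simp [A, hk]
  · simp only [A, if_neg hk, FreeGroup.lift_apply_of, bwd]
    rw [if_neg]
    rintro ⟨-, rfl⟩; exact h rfl

lemma comp_bwd_fwd (i : ℕ) :
    (FreeGroup.lift (bwd i)).comp (FreeGroup.lift (fwd i)) = MonoidHom.id _ := by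
  apply FreeGroup.ext_hom
  intro j
  simp only [MonoidHom.comp_apply, FreeGroup.lift_apply_of, MonoidHom.id_apply]
  unfold fwd
  by_cases h : 1 ≤ i ∧ j = i
  · obtain ⟨hi, hji⟩ := h
    subst hji
    rw [if_pos ⟨hi, rfl⟩]
    have hj : A j = FreeGroup.of j := by simp only [A, if_neg (by omega : ¬ j = 0)]
    rw [map_mul, map_mul, map_inv]
    rw [lift_bwd_A j (j + 1) (by omega), lift_bwd_A j (j - 1) (by omega)]
    rw [← hj]
    have hAj : FreeGroup.lift (bwd j) (A j) = A (j - 1) * (A j)⁻¹ * A (j + 1) := by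
      rw [hj, FreeGroup.lift_apply_of, bwd, if_pos ⟨hi, rfl⟩, hj]
    rw [hAj]
    group
  · rw [if_neg h]
    simp only [FreeGroup.lift_apply_of, bwd]
    rw [if_neg h]

lemma comp_fwd_bwd (i : ℕ) :
    (FreeGroup.lift (fwd i)).comp (FreeGroup.lift (bwd i)) = MonoidHom.id _ := by
  apply FreeGroup.ext_hom
  intro j
  simp only [MonoidHom.comp_apply, FreeGroup.lift_apply_of, MonoidHom.id_apply]
  unfold bwd
  by_cases h : 1 ≤ i ∧ j = i
  · obtain ⟨hi, hji⟩ := h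
    subst hji
    rw [if_pos ⟨hi, rfl⟩]
    have hj : A j = FreeGroup.of j := by simp only [A, if_neg (by omega : ¬ j = 0)]
    rw [map_mul, map_mul, map_inv]
    rw [lift_fwd_A j (j + 1) (by omega), lift_fwd_A j (j - 1) (by omega)]
    rw [← hj]
    have hAj : FreeGroup.lift (fwd j) (A j) = A (j + 1) * (A j)⁻¹ * A (j - 1) := by
      rw [hj, FreeGroup.lift_apply_of, fwd, if_pos ⟨hi, rfl⟩, hj]
    rw [hAj]
    group
  · rw [if_neg h]
    simp only [FreeGroup.lift_apply_of, fwd]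
    rw [if_neg h]

/-- The automorphism of `F_n` given by the Artin generator `σ_i`. -/
def gen (i : ℕ) : MulAut (FreeGroup ℕ) where
  toFun := FreeGroup.lift (fwd i)
  invFun := FreeGroup.lift (bwd i)
  left_inv x := by
    have := DFunLike.congr_fun (comp_bwd_fwd i) x
    simpa using this
  right_inv x := by
    have := DFunLike.congr_fun (comp_fwd_bwd i) x
    simpa using this
  map_mul' := map_mul _

/-- The Artin representation, as a homomorphism from words in the braid generators
(`FreeGroup ℕ`, letter `i` standing for `σ_i`) to the opposite of `Aut(F_n)`;
the opposite group is used so that `w^{βγ} = (w^β)^γ`. -/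
def rep : FreeGroup ℕ →* (MulAut (FreeGroup ℕ))ᵐᵒᵖ :=
  FreeGroup.lift (fun i => MulOpposite.op (gen i))

/-- The (right) Artin action: `act b w = w^b`. -/
def act (b w : FreeGroup ℕ) : FreeGroup ℕ := (rep b).unop w


/-- The word `ρ = σ_{n-1} ⋯ σ_2 σ_1` in the braid generators. -/
def ρw (n : ℕ) : FreeGroup ℕ :=
  (((List.range (n - 1)).map (fun k => FreeGroup.of (k + 1))).reverse).prod

/-- The word `δ = σ_1 σ_2 ⋯ σ_{n-1}` in the braid generators. -/
def δw (n : ℕ) : FreeGroup ℕ :=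
  ((List.range (n - 1)).map (fun k => FreeGroup.of (k + 1))).prod

/-- The full-twist word `θ = (σ_1 ⋯ σ_{n-1})^n`. -/
def θw (n : ℕ) : FreeGroup ℕ := δw n ^ n

/-- The word `β(m) = σ_1^m ρ`. -/
def βw (n m : ℕ) : FreeGroup ℕ := FreeGroup.of 1 ^ m * ρw n

lemma act_of (i : ℕ) (w : FreeGroup ℕ) : act (FreeGroup.of i) w = FreeGroup.lift (fwd i) w :=
  rfl

lemma act_one (w : FreeGroup ℕ) : act 1 w = w :=
  rfl

lemma act_mul (b c w : FreeGroup ℕ) : act (b * c) w = act c (act b w) := by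
  simp only [act, map_mul, MulOpposite.unop_mul, MulAut.mul_apply]

lemma act_apply_mul (b x y : FreeGroup ℕ) : act b (x * y) = act b x * act b y :=
  map_mul (rep b).unop x y

lemma act_apply_inv (b x : FreeGroup ℕ) : act b x⁻¹ = (act b x)⁻¹ :=
  map_inv (rep b).unop x

lemma act_apply_pow (b x : FreeGroup ℕ) (k : ℕ) : act b (x ^ k) = act b x ^ k :=
  map_pow (rep b).unop x k

lemma A_zero : A 0 = 1 :=
  if_pos rfl

lemma act_apply_A_zero (b : FreeGroup ℕ) : act b (A 0) = 1 := by
  rw [A_zero]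
  exact map_one (rep b).unop

lemma act_of_zero (w : FreeGroup ℕ) : act (FreeGroup.of 0) w = w := by
  have hfwd : fwd 0 = FreeGroup.of := funext fun j => if_neg (by omega)
  rw [act_of, hfwd, FreeGroup.lift_of_apply]

lemma act_of_A_of_ne {i k : ℕ} (h : k ≠ i) : act (FreeGroup.of i) (A k) = A k :=
  lift_fwd_A i k h

lemma act_of_A_self {i : ℕ} (hi : 1 ≤ i) :
    act (FreeGroup.of i) (A i) = A (i + 1) * (A i)⁻¹ * A (i - 1) := by
  have hA : A i = FreeGroup.of i := if_neg (by omega)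
  rw [act_of, hA, FreeGroup.lift_apply_of, fwd, if_pos ⟨hi, rfl⟩, ← hA]

lemma act_of_one_A_one : act (FreeGroup.of 1) (A 1) = A 2 * (A 1)⁻¹ := by
  rw [act_of_A_self le_rfl, A_zero, mul_one]

lemma act_of_pow_A_of_ne {i k : ℕ} (h : k ≠ i) (m : ℕ) :
    act (FreeGroup.of i ^ m) (A k) = A k := by
  induction m with
  | zero => exact act_one _
  | succ m ih => rw [pow_succ, act_mul, ih, act_of_A_of_ne h]

lemma act_of_one_sq_A_one : act (FreeGroup.of 1 ^ 2) (A 1) = A 2 * A 1 * (A 2)⁻¹ := by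
  rw [pow_two, act_mul, act_of_one_A_one, act_apply_mul, act_apply_inv,
    act_of_A_of_ne (by omega : 2 ≠ 1), act_of_one_A_one]
  group

lemma act_of_one_pow_even_A_one (k : ℕ) :
    act (FreeGroup.of 1 ^ (2 * k)) (A 1) = A 2 ^ k * A 1 * (A 2 ^ k)⁻¹ := by
  induction k with
  | zero => simp [act_one]
  | succ k ih =>
    rw [mul_add_one, pow_add, act_mul, ih]
    simp only [act_apply_mul, act_apply_inv, act_apply_pow, act_of_one_sq_A_one,
      act_of_pow_A_of_ne (by omega : 2 ≠ 1)]
    group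

lemma act_of_one_pow_odd_A_one (k : ℕ) :
    act (FreeGroup.of 1 ^ (2 * k + 1)) (A 1) = A 2 ^ k * (A 2 * (A 1)⁻¹) * (A 2 ^ k)⁻¹ := by
  rw [pow_succ, act_mul, act_of_one_pow_even_A_one]
  simp only [act_apply_mul, act_apply_inv, act_apply_pow, act_of_A_of_ne (by omega : 2 ≠ 1),
    act_of_one_A_one]

lemma act_ρw_succ (n : ℕ) (w : FreeGroup ℕ) :
    act (ρw (n + 1)) w = act (ρw n) (act (FreeGroup.of n) w) := by
  -- `ρw 1 = ρw 0 = 1`, matched by the trivial action of the letter `0`.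
  cases n with
  | zero => simp [ρw, act_of_zero, act_one]
  | succ n => simp [ρw, List.range_succ, act_mul]

lemma act_ρw_A_of_le {n k : ℕ} (h : n ≤ k) : act (ρw n) (A k) = A k := by
  induction n with
  | zero => exact act_one _
  | succ n ih => rw [act_ρw_succ, act_of_A_of_ne (by omega), ih (by omega)]

lemma act_ρw_A_of_lt {n i : ℕ} (h : i < n) : act (ρw n) (A i) = A (i + 1) * (A 1)⁻¹ := by
  induction n generalizing i with
  | zero => omega
  | succ n ih =>
    rw [act_ρw_succ]
    rcases Nat.lt_succ_iff_lt_or_eq.mp h with hi | rfl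
    · rw [act_of_A_of_ne (by omega), ih hi]
    · rcases Nat.eq_zero_or_pos i with rfl | hi
      · rw [act_of_zero, act_apply_A_zero, zero_add, mul_inv_cancel]
      · rw [act_of_A_self hi, act_apply_mul, act_apply_mul, act_apply_inv,
          act_ρw_A_of_le (by omega), act_ρw_A_of_le le_rfl, ih (by omega),
          Nat.sub_add_cancel hi]
        group

theorem beta_action_general (n : ℕ) (hn : 3 ≤ n) (m : ℕ) :
    (Odd m → act (βw n m) (A 1) =
      (A 3 * (A 1)⁻¹) ^ ((m - 1) / 2) * (A 3 * (A 2)⁻¹) *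
        ((A 3 * (A 1)⁻¹) ^ ((m - 1) / 2))⁻¹) ∧
    (Even m → act (βw n m) (A 1) =
      (A 3 * (A 1)⁻¹) ^ (m / 2) * (A 2 * (A 1)⁻¹) * ((A 3 * (A 1)⁻¹) ^ (m / 2))⁻¹) ∧
    (∀ i, 2 ≤ i → i ≤ n - 1 → act (βw n m) (A i) = A (i + 1) * (A 1)⁻¹) := by
  have hρ1 := act_ρw_A_of_lt (by omega : 1 < n)
  have hρ2 := act_ρw_A_of_lt (by omega : 2 < n)
  refine ⟨?_, ?_, ?_⟩
  · rintro ⟨k, rfl⟩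
    rw [show (2 * k + 1 - 1) / 2 = k by omega, βw, act_mul, act_of_one_pow_odd_A_one]
    simp only [act_apply_mul, act_apply_inv, act_apply_pow, hρ1, hρ2]
    congr 2
    group
  · rintro ⟨k, rfl⟩
    rw [show (k + k) / 2 = k by omega, ← two_mul, βw, act_mul, act_of_one_pow_even_A_one]
    simp only [act_apply_mul, act_apply_inv, act_apply_pow, hρ1, hρ2]
  · intro i hi2 hin
    rw [βw, act_mul, act_of_pow_A_of_ne (by omega), act_ρw_A_of_lt (by omega)]

/-- under the Artin action, for a positive integer `m` the braid
`β(m) = σ_1^m ρ` satisfies: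
`a_1^{β(m)} = (a_3 a_1⁻¹)^{(m-1)/2} (a_3 a_2⁻¹) (a_3 a_1⁻¹)^{-(m-1)/2}` if `m` is odd,
`a_1^{β(m)} = (a_3 a_1⁻¹)^{m/2} (a_2 a_1⁻¹) (a_3 a_1⁻¹)^{-m/2}` if `m` is even, and
`a_i^{β(m)} = a_{i+1} a_1⁻¹` for `2 ≤ i ≤ n-1`. -/
theorem beta_action (n : ℕ) (hn : 3 ≤ n) (m : ℕ) (hm : 1 ≤ m) :
    (Odd m → act (βw n m) (A 1) =
      (A 3 * (A 1)⁻¹) ^ ((m - 1) / 2) * (A 3 * (A 2)⁻¹) *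
        ((A 3 * (A 1)⁻¹) ^ ((m - 1) / 2))⁻¹) ∧
    (Even m → act (βw n m) (A 1) =
      (A 3 * (A 1)⁻¹) ^ (m / 2) * (A 2 * (A 1)⁻¹) * ((A 3 * (A 1)⁻¹) ^ (m / 2))⁻¹) ∧
    (∀ i, 2 ≤ i → i ≤ n - 1 → act (βw n m) (A i) = A (i + 1) * (A 1)⁻¹) :=
  beta_action_general n hn m

end Artin
end
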